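/- Let S be a commutative ring, F a formal group law over S, n ≥ 2, and 1 ≤ i ≤ n−1. Then in A = R ⊗_{R^{s_i}} R, for every r ∈ R one has the exchange identities (r ⊗ 1)·ξ = (1 ⊗ r)·ξ and (r ⊗ 1)·ξ' = (1 ⊗ s_i(r))·ξ'; i.e. left multiplication across ξ equals right multiplication, and left multiplication across ξ' equals s_i-twisted right multiplication. -/

import Mathlib

/- Common setup: substitution of multivariate power series, formal group laws,
formal inverses, and the variable–swapping operation. -/

open MvPowerSeries Finsupp

noncomputable section

variable {S : Type*} [CommRing S]

/-- Substitution of a family of multivariate power series (each intended to have zero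
constant coefficient) into a power series in `k` variables.  When every `a j` has zero
constant coefficient, the coefficient of a monomial `m` of the substituted series only
receives contributions from exponents `d` with `d j ≤ deg m`, so the finite sum below
computes the genuine substitution. -/
noncomputable def msubst {k n : ℕ} (a : Fin k → MvPowerSeries (Fin n) S)
    (F : MvPowerSeries (Fin k) S) : MvPowerSeries (Fin n) S :=
  fun m =>
    ∑ d ∈ Finset.Iic (equivFunOnFinite.symm fun _ : Fin k => m.sum fun _ e => e),
      MvPowerSeries.coeff (R := S) d F * MvPowerSeries.coeff (R := S) m (∏ j, a j ^ d j)

/-- `F ∈ S[[x,y]]` is a (one-dimensional, commutative) formal group law over `S`: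
zero constant coefficient, commutativity `F(x,y) = F(y,x)`, unitality `F(x,0) = x`,
and associativity `F(F(x,y),z) = F(x,F(y,z))`. -/
def IsFormalGroupLaw (F : MvPowerSeries (Fin 2) S) : Prop :=
  MvPowerSeries.constantCoeff (σ := Fin 2) (R := S) F = 0 ∧
  msubst ![(X 1 : MvPowerSeries (Fin 2) S), X 0] F = F ∧
  msubst ![(X 0 : MvPowerSeries (Fin 2) S), 0] F = X 0 ∧
  msubst ![msubst ![(X 0 : MvPowerSeries (Fin 3) S), X 1] F, X 2] F
    = msubst ![(X 0 : MvPowerSeries (Fin 3) S), msubst ![(X 1 : MvPowerSeries (Fin 3) S), X 2] F] F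

/-- `ι ∈ S[[x]]` is the formal inverse of `F`: it has zero constant coefficient
and `F(x, ι(x)) = 0`. -/
def IsFormalInverse (F : MvPowerSeries (Fin 2) S) (ι : MvPowerSeries (Fin 1) S) : Prop :=
  MvPowerSeries.constantCoeff (σ := Fin 1) (R := S) ι = 0 ∧
  msubst ![(X 0 : MvPowerSeries (Fin 1) S), ι] F = 0

/-- `ι(b)`, the substitution of `b` into the formal inverse `ι`. -/
noncomputable def fneg (ι : MvPowerSeries (Fin 1) S) {n : ℕ}
    (b : MvPowerSeries (Fin n) S) : MvPowerSeries (Fin n) S :=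
  msubst ![b] ι

/-- `a −_F b := F(a, ι(b))`. -/
noncomputable def fsub (F : MvPowerSeries (Fin 2) S) (ι : MvPowerSeries (Fin 1) S) {n : ℕ}
    (a b : MvPowerSeries (Fin n) S) : MvPowerSeries (Fin n) S :=
  msubst ![a, fneg ι b] F

/-- Substitution `g(a,b)` of two power series into a two-variable power series `g`. -/
noncomputable def gsub (g : MvPowerSeries (Fin 2) S) {n : ℕ}
    (a b : MvPowerSeries (Fin n) S) : MvPowerSeries (Fin n) S :=
  msubst ![a, b] g

/-- The map on multivariate power series interchanging the variables `x_i` and `x_j`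
(the renaming along the transposition `(i,j)`). -/
def swapVars {n : ℕ} (i j : Fin n) (f : MvPowerSeries (Fin n) S) :
    MvPowerSeries (Fin n) S :=
  fun m => f (equivMapDomain (Equiv.swap i j) m)

theorem swapVars_coeff {n : ℕ} (i j : Fin n) (f : MvPowerSeries (Fin n) S) (m : Fin n →₀ ℕ) :
    MvPowerSeries.coeff (R := S) m (swapVars i j f)
      = MvPowerSeries.coeff (R := S) (equivMapDomain (Equiv.swap i j) m) f := rfl

theorem equivMapDomain_swap_invol {n : ℕ} (i j : Fin n) (m : Fin n →₀ ℕ) :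
    equivMapDomain (Equiv.swap i j) (equivMapDomain (Equiv.swap i j) m) = m := by
  rw [← equivMapDomain_trans, Equiv.swap_swap, equivMapDomain_refl]

theorem equivMapDomain_add' {n : ℕ} (e : Fin n ≃ Fin n) (a b : Fin n →₀ ℕ) :
    equivMapDomain e (a + b) = equivMapDomain e a + equivMapDomain e b := by
  ext x; simp [equivMapDomain_apply]

theorem swapVars_add {n : ℕ} (i j : Fin n) (f h : MvPowerSeries (Fin n) S) :
    swapVars i j (f + h) = swapVars i j f + swapVars i j h := rfl

theorem swapVars_mul {n : ℕ} (i j : Fin n) (f h : MvPowerSeries (Fin n) S) :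
    swapVars i j (f * h) = swapVars i j f * swapVars i j h := by
  ext m
  rw [swapVars_coeff, MvPowerSeries.coeff_mul, MvPowerSeries.coeff_mul]
  refine Finset.sum_nbij'
    (fun p => (equivMapDomain (Equiv.swap i j) p.1, equivMapDomain (Equiv.swap i j) p.2))
    (fun p => (equivMapDomain (Equiv.swap i j) p.1, equivMapDomain (Equiv.swap i j) p.2))
    ?_ ?_ ?_ ?_ ?_
  · intro p hp
    rw [Finset.HasAntidiagonal.mem_antidiagonal] at hp ⊢
    rw [← equivMapDomain_add', hp, equivMapDomain_swap_invol]
  · intro p hp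
    rw [Finset.HasAntidiagonal.mem_antidiagonal] at hp ⊢
    rw [← equivMapDomain_add', hp]
  · intro p _; simp [equivMapDomain_swap_invol]
  · intro p _; simp [equivMapDomain_swap_invol]
  · intro p _
    rw [swapVars_coeff, swapVars_coeff, equivMapDomain_swap_invol, equivMapDomain_swap_invol]

theorem swapVars_C {n : ℕ} (i j : Fin n) (s : S) :
    swapVars i j (MvPowerSeries.C (σ := Fin n) (R := S) s) = MvPowerSeries.C (σ := Fin n) (R := S) s := by
  ext m
  rw [swapVars_coeff, MvPowerSeries.coeff_C, MvPowerSeries.coeff_C]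
  by_cases hm : m = 0
  · subst hm; rw [equivMapDomain_zero]
  · rw [if_neg, if_neg hm]
    intro hc
    apply hm
    have := congrArg (equivMapDomain (Equiv.swap i j)) hc
    rwa [equivMapDomain_swap_invol, equivMapDomain_zero] at this

theorem swapVars_one {n : ℕ} (i j : Fin n) :
    swapVars i j (1 : MvPowerSeries (Fin n) S) = 1 := by
  have := swapVars_C (S := S) i j 1
  rwa [map_one] at this

/-- The fixed subalgebra `R^{s_i}` of power series invariant under interchanging
the variables `x_i` and `x_j`. -/
noncomputable def fixedSubalgebra (S : Type*) [CommRing S] {n : ℕ} (i j : Fin n) :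
    Subalgebra S (MvPowerSeries (Fin n) S) where
  carrier := {f | swapVars i j f = f}
  mul_mem' := by
    intro a b ha hb
    simp only [Set.mem_setOf_eq] at *
    rw [swapVars_mul, ha, hb]
  add_mem' := by
    intro a b ha hb
    simp only [Set.mem_setOf_eq] at *
    rw [swapVars_add, ha, hb]
  algebraMap_mem' := fun s => swapVars_C i j s

/-- `s_i` as an algebra homomorphism over the fixed subalgebra. -/
noncomputable def swapAlgHom (S : Type*) [CommRing S] {n : ℕ} (i j : Fin n) :
    MvPowerSeries (Fin n) S →ₐ[fixedSubalgebra S i j] MvPowerSeries (Fin n) S where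
  toFun := swapVars i j
  map_one' := swapVars_one i j
  map_mul' := swapVars_mul i j
  map_zero' := rfl
  map_add' := swapVars_add i j
  commutes' := fun r => r.2

open TensorProduct in
/-- The elementary Bott–Samelson bimodule `A = R ⊗_{R^{s_i}} R`. -/
noncomputable abbrev BSB (S : Type*) [CommRing S] {n : ℕ} (i j : Fin n) : Type _ :=
  (MvPowerSeries (Fin n) S) ⊗[fixedSubalgebra S i j] (MvPowerSeries (Fin n) S)

/-- The multiplication map `μ : A → R`, `r1 ⊗ r2 ↦ r1·r2`. -/
noncomputable def mulHom (S : Type*) [CommRing S] {n : ℕ} (i j : Fin n) :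
    BSB S i j →ₐ[fixedSubalgebra S i j] MvPowerSeries (Fin n) S :=
  Algebra.TensorProduct.productMap (AlgHom.id _ _) (AlgHom.id _ _)

/-- The twisted multiplication map `μ_s : A → R`, `r1 ⊗ r2 ↦ r1·s_i(r2)`. -/
noncomputable def mulsHom (S : Type*) [CommRing S] {n : ℕ} (i j : Fin n) :
    BSB S i j →ₐ[fixedSubalgebra S i j] MvPowerSeries (Fin n) S :=
  Algebra.TensorProduct.productMap (AlgHom.id _ _) (swapAlgHom S i j)

open TensorProduct in
/-- The element `ξ = x_i⊗1 −_F 1⊗x_{i+1} := (g(x_i,x_j)⁻¹ ⊗ 1)·(1 ⊗ x_i − x_j ⊗ 1)` of `A`. -/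
noncomputable def xiElt (g : MvPowerSeries (Fin 2) S) {n : ℕ} (i j : Fin n) : BSB S i j :=
  (Ring.inverse (gsub g (X i) (X j)) ⊗ₜ[fixedSubalgebra S i j] (1 : MvPowerSeries (Fin n) S)) *
    ((1 : MvPowerSeries (Fin n) S) ⊗ₜ[fixedSubalgebra S i j] (X i)
      - (X j) ⊗ₜ[fixedSubalgebra S i j] (1 : MvPowerSeries (Fin n) S))

open TensorProduct in
/-- The element `ξ' = x_{i+1}⊗1 −_F 1⊗x_{i+1} := (g(x_j,x_i)⁻¹ ⊗ 1)·(1 ⊗ x_i − x_i ⊗ 1)` of `A`. -/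
noncomputable def xiElt' (g : MvPowerSeries (Fin 2) S) {n : ℕ} (i j : Fin n) : BSB S i j :=
  (Ring.inverse (gsub g (X j) (X i)) ⊗ₜ[fixedSubalgebra S i j] (1 : MvPowerSeries (Fin n) S)) *
    ((1 : MvPowerSeries (Fin n) S) ⊗ₜ[fixedSubalgebra S i j] (X i)
      - (X i) ⊗ₜ[fixedSubalgebra S i j] (1 : MvPowerSeries (Fin n) S))

open TensorProduct

/-!
Write `b = (r - s_i r) / (x_i - x_j)` for the divided difference. Then `b` and
`a = r - b x_i` are `s_i`-invariant and `s_i r = a + b x_j`, so in `A`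
`r ⊗ 1 - 1 ⊗ r = (b ⊗ 1) (x_i ⊗ 1 - 1 ⊗ x_i)` and `r ⊗ 1 - 1 ⊗ s_i r = (b ⊗ 1) (x_i ⊗ 1 - 1 ⊗ x_j)`.
Since `x_i + x_j` and `x_i x_j` are invariant, these kill the factors `1 ⊗ x_i - x_j ⊗ 1` of `ξ`
and `1 ⊗ x_i - x_i ⊗ 1` of `ξ'`.

The division is done on coefficients: for every `p`, `p - p(x_i := x_j) = Q(p) (x_i - x_j)` for an
explicit `Q` which is also a left inverse of multiplication by `x_i - x_j`, and `r - s_i r`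
vanishes under `x_i := x_j`. The invariance of `b` follows from this cancellation.
-/

section SetExps

variable {σ : Type*} {i j : σ}

def setExps (i j : σ) (m : σ →₀ ℕ) (s t : ℕ) : σ →₀ ℕ :=
  (m.update i s).update j t

theorem setExps_self (m : σ →₀ ℕ) : setExps i j m (m i) (m j) = m := by
  simp [setExps]

theorem setExps_apply_left (hij : i ≠ j) (m : σ →₀ ℕ) (s t : ℕ) : setExps i j m s t i = s := by
  classical
  simp [setExps, Finsupp.update_apply, hij]

theorem setExps_apply_right (m : σ →₀ ℕ) (s t : ℕ) : setExps i j m s t j = t := by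
  classical
  simp [setExps, Finsupp.update_apply]

theorem setExps_setExps (m : σ →₀ ℕ) (s t s' t' : ℕ) :
    setExps i j (setExps i j m s t) s' t' = setExps i j m s' t' := by
  classical
  ext k
  simp only [setExps, Finsupp.update_apply]
  split_ifs <;> rfl

theorem setExps_succ_left (hij : i ≠ j) (m : σ →₀ ℕ) (s t : ℕ) :
    setExps i j m (s + 1) t = setExps i j m s t + single i 1 := by
  classical
  ext k
  simp only [setExps, Finsupp.update_apply, Finsupp.add_apply, Finsupp.single_apply]
  grind

theorem setExps_succ_right (m : σ →₀ ℕ) (s t : ℕ) :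
    setExps i j m s (t + 1) = setExps i j m s t + single j 1 := by
  classical
  ext k
  simp only [setExps, Finsupp.update_apply, Finsupp.add_apply, Finsupp.single_apply]
  grind

theorem equivMapDomain_swap_setExps [DecidableEq σ] (hij : i ≠ j) (m : σ →₀ ℕ) (s t : ℕ) :
    equivMapDomain (Equiv.swap i j) (setExps i j m s t) = setExps i j m t s := by
  ext k
  simp only [equivMapDomain_apply, Equiv.symm_swap, setExps, Finsupp.update_apply]
  rcases eq_or_ne k i with rfl | hki
  · simp [hij]
  rcases eq_or_ne k j with rfl | hkj
  · simp [hij]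
  · simp [Equiv.swap_apply_of_ne_of_ne hki hkj, hki, hkj]

end SetExps

section DividedDifference

open Finset.HasAntidiagonal

variable {σ R : Type*} [Ring R] {i j : σ}

theorem ext_setExps (i j : σ) {p q : MvPowerSeries σ R}
    (h : ∀ m s t, coeff (setExps i j m s t) p = coeff (setExps i j m s t) q) : p = q :=
  MvPowerSeries.ext fun m => by simpa only [setExps_self] using h m (m i) (m j)

theorem coeff_setExps_zero_mul_X_left (hij : i ≠ j) (q : MvPowerSeries σ R) (m : σ →₀ ℕ)
    (t : ℕ) : coeff (setExps i j m 0 t) (q * X i) = 0 := by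
  classical
  rw [X, coeff_mul_monomial, if_neg]
  simp [Finsupp.single_le_iff, setExps_apply_left hij]

theorem coeff_setExps_succ_mul_X_left (hij : i ≠ j) (q : MvPowerSeries σ R) (m : σ →₀ ℕ)
    (s t : ℕ) : coeff (setExps i j m (s + 1) t) (q * X i) = coeff (setExps i j m s t) q := by
  rw [setExps_succ_left hij, X, coeff_add_mul_monomial, mul_one]

theorem coeff_setExps_zero_mul_X_right (q : MvPowerSeries σ R) (m : σ →₀ ℕ) (s : ℕ) :
    coeff (setExps i j m s 0) (q * X j) = 0 := by
  classical
  rw [X, coeff_mul_monomial, if_neg]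
  simp [Finsupp.single_le_iff, setExps_apply_right]

theorem coeff_setExps_succ_mul_X_right (q : MvPowerSeries σ R) (m : σ →₀ ℕ) (s t : ℕ) :
    coeff (setExps i j m s (t + 1)) (q * X j) = coeff (setExps i j m s t) q := by
  rw [setExps_succ_right, X, coeff_add_mul_monomial, mul_one]

def subXQuot (i j : σ) (p : MvPowerSeries σ R) : MvPowerSeries σ R :=
  fun m => ∑ x ∈ antidiagonal (m j), coeff (setExps i j m (m i + x.1 + 1) x.2) p

/-- The substitution `x_i ↦ x_j`. -/
def diagSubst (i j : σ) (p : MvPowerSeries σ R) : MvPowerSeries σ R :=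
  fun m => if m i = 0 then ∑ x ∈ antidiagonal (m j), coeff (setExps i j m x.1 x.2) p else 0

theorem coeff_subXQuot (p : MvPowerSeries σ R) (m : σ →₀ ℕ) :
    coeff m (subXQuot i j p)
      = ∑ x ∈ antidiagonal (m j), coeff (setExps i j m (m i + x.1 + 1) x.2) p :=
  rfl

theorem coeff_diagSubst (p : MvPowerSeries σ R) (m : σ →₀ ℕ) :
    coeff m (diagSubst i j p)
      = if m i = 0 then ∑ x ∈ antidiagonal (m j), coeff (setExps i j m x.1 x.2) p else 0 :=
  rfl

theorem coeff_setExps_subXQuot (hij : i ≠ j) (p : MvPowerSeries σ R) (m : σ →₀ ℕ) (s t : ℕ) :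
    coeff (setExps i j m s t) (subXQuot i j p)
      = ∑ x ∈ antidiagonal t, coeff (setExps i j m (s + x.1 + 1) x.2) p := by
  simp only [coeff_subXQuot, setExps_apply_left hij, setExps_apply_right, setExps_setExps]

theorem coeff_setExps_diagSubst (hij : i ≠ j) (p : MvPowerSeries σ R) (m : σ →₀ ℕ) (s t : ℕ) :
    coeff (setExps i j m s t) (diagSubst i j p)
      = if s = 0 then ∑ x ∈ antidiagonal t, coeff (setExps i j m x.1 x.2) p else 0 := by
  simp only [coeff_diagSubst, setExps_apply_left hij, setExps_apply_right, setExps_setExps]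

theorem subXQuot_mul_sub_X (hij : i ≠ j) (q : MvPowerSeries σ R) :
    subXQuot i j (q * (X i - X j)) = q := by
  refine ext_setExps i j fun m s t => ?_
  simp only [coeff_setExps_subXQuot hij, mul_sub, map_sub, coeff_setExps_succ_mul_X_left hij,
    Finset.sum_sub_distrib]
  cases t with
  | zero => simp [coeff_setExps_zero_mul_X_right]
  | succ t =>
    rw [Finset.Nat.sum_antidiagonal_succ, Finset.Nat.sum_antidiagonal_succ',
      coeff_setExps_zero_mul_X_right]
    simp only [coeff_setExps_succ_mul_X_right, add_zero, add_assoc, zero_add, add_sub_cancel_right]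

theorem sub_diagSubst_eq_subXQuot_mul (hij : i ≠ j) (p : MvPowerSeries σ R) :
    p - diagSubst i j p = subXQuot i j p * (X i - X j) := by
  refine ext_setExps i j fun m s t => ?_
  rw [map_sub, coeff_setExps_diagSubst hij, mul_sub, map_sub]
  cases s with
  | zero =>
    cases t with
    | zero => simp [coeff_setExps_zero_mul_X_left hij, coeff_setExps_zero_mul_X_right]
    | succ t =>
      rw [coeff_setExps_zero_mul_X_left hij, coeff_setExps_succ_mul_X_right,
        coeff_setExps_subXQuot hij, Finset.Nat.sum_antidiagonal_succ]
      simp [add_comm]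
  | succ s =>
    rw [coeff_setExps_succ_mul_X_left hij, coeff_setExps_subXQuot hij, if_neg s.succ_ne_zero]
    cases t with
    | zero => simp [coeff_setExps_zero_mul_X_right]
    | succ t =>
      rw [coeff_setExps_succ_mul_X_right, coeff_setExps_subXQuot hij,
        Finset.Nat.sum_antidiagonal_succ]
      have hshift (x : ℕ × ℕ) : s + (x.1 + 1) + 1 = s + 1 + x.1 + 1 := by omega
      simp only [hshift, add_zero, sub_zero, add_sub_cancel_right]

end DividedDifference

section Demazure

variable {n : ℕ} {i j : Fin n}

theorem swapVars_eq_rename (i j : Fin n) (p : MvPowerSeries (Fin n) S) :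
    swapVars i j p = rename (Equiv.swap i j) p := by
  ext m
  have h : coeff (embDomain (Equiv.swap i j).toEmbedding (equivMapDomain (Equiv.swap i j) m))
      (rename (Equiv.swap i j) p) = coeff (equivMapDomain (Equiv.swap i j) m) p :=
    coeff_embDomain_rename _ p _
  rwa [embDomain_eq_mapDomain, Equiv.coe_toEmbedding, ← equivMapDomain_eq_mapDomain,
    equivMapDomain_swap_invol, eq_comm] at h

theorem swapVars_X_left (i j : Fin n) : swapVars i j (X i : MvPowerSeries (Fin n) S) = X j := by
  rw [swapVars_eq_rename, rename_X, Equiv.swap_apply_left]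

theorem swapVars_X_right (i j : Fin n) : swapVars i j (X j : MvPowerSeries (Fin n) S) = X i := by
  rw [swapVars_eq_rename, rename_X, Equiv.swap_apply_right]

theorem swapVars_swapVars (i j : Fin n) (p : MvPowerSeries (Fin n) S) :
    swapVars i j (swapVars i j p) = p := by
  ext m
  rw [swapVars_coeff, swapVars_coeff, equivMapDomain_swap_invol]

theorem swapVars_sub (i j : Fin n) (p q : MvPowerSeries (Fin n) S) :
    swapVars i j (p - q) = swapVars i j p - swapVars i j q :=
  rfl

theorem diagSubst_sub_swapVars (hij : i ≠ j) (p : MvPowerSeries (Fin n) S) :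
    diagSubst i j (p - swapVars i j p) = 0 := by
  refine ext_setExps i j fun m s t => ?_
  rw [coeff_setExps_diagSubst hij, map_zero]
  split_ifs
  · simp only [map_sub, swapVars_coeff, equivMapDomain_swap_setExps hij, Finset.sum_sub_distrib]
    rw [← Finset.Nat.sum_antidiagonal_swap]
    exact sub_self _
  · rfl

def divDiff (i j : Fin n) (r : MvPowerSeries (Fin n) S) : MvPowerSeries (Fin n) S :=
  subXQuot i j (r - swapVars i j r)

theorem divDiff_mul_sub_X (hij : i ≠ j) (r : MvPowerSeries (Fin n) S) :
    divDiff i j r * (X i - X j) = r - swapVars i j r := by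
  rw [divDiff, ← sub_diagSubst_eq_subXQuot_mul hij, diagSubst_sub_swapVars hij, sub_zero]

theorem swapVars_divDiff (hij : i ≠ j) (r : MvPowerSeries (Fin n) S) :
    swapVars i j (divDiff i j r) = divDiff i j r := by
  have h := congrArg (swapVars i j) (divDiff_mul_sub_X hij r)
  rw [swapVars_mul, swapVars_sub, swapVars_sub, swapVars_X_left, swapVars_X_right,
    swapVars_swapVars] at h
  calc swapVars i j (divDiff i j r)
      = subXQuot i j (swapVars i j (divDiff i j r) * (X i - X j)) :=
        (subXQuot_mul_sub_X hij _).symm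
    _ = subXQuot i j (divDiff i j r * (X i - X j)) := by
        rw [divDiff_mul_sub_X hij]
        congr 1
        linear_combination -h
    _ = divDiff i j r := subXQuot_mul_sub_X hij _

theorem swapVars_sub_divDiff_mul_X (hij : i ≠ j) (r : MvPowerSeries (Fin n) S) :
    swapVars i j (r - divDiff i j r * X i) = r - divDiff i j r * X i := by
  rw [swapVars_sub, swapVars_mul, swapVars_divDiff hij, swapVars_X_left]
  linear_combination divDiff_mul_sub_X hij r

theorem swapVars_eq_sub_divDiff_mul_X_add (hij : i ≠ j) (r : MvPowerSeries (Fin n) S) :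
    swapVars i j r = r - divDiff i j r * X i + divDiff i j r * X j := by
  linear_combination divDiff_mul_sub_X hij r

end Demazure

section Exchange

variable {n : ℕ} {i j : Fin n}

theorem tmul_one_eq_one_tmul_of_swapVars_eq {c : MvPowerSeries (Fin n) S}
    (hc : swapVars i j c = c) : (c ⊗ₜ 1 : BSB S i j) = 1 ⊗ₜ c :=
  Algebra.TensorProduct.tmul_one_eq_one_tmul (⟨c, hc⟩ : fixedSubalgebra S i j)

theorem add_mul_tmul_one_sub_one_tmul_add_mul {a b : MvPowerSeries (Fin n) S}
    (ha : swapVars i j a = a) (hb : swapVars i j b = b) (x y : MvPowerSeries (Fin n) S) :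
    ((a + b * x) ⊗ₜ 1 - 1 ⊗ₜ (a + b * y) : BSB S i j) = (b ⊗ₜ 1) * (x ⊗ₜ 1 - 1 ⊗ₜ y) := by
  rw [add_tmul, tmul_add, tmul_one_eq_one_tmul_of_swapVars_eq ha, mul_sub,
    Algebra.TensorProduct.tmul_mul_tmul, mul_one, tmul_one_eq_one_tmul_of_swapVars_eq hb,
    Algebra.TensorProduct.tmul_mul_tmul, one_mul]
  abel

theorem tmul_one_sub_one_tmul_eq_divDiff_mul (hij : i ≠ j) (r : MvPowerSeries (Fin n) S) :
    (r ⊗ₜ 1 - 1 ⊗ₜ r : BSB S i j) = (divDiff i j r ⊗ₜ 1) * (X i ⊗ₜ 1 - 1 ⊗ₜ X i) := by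
  have h := add_mul_tmul_one_sub_one_tmul_add_mul (swapVars_sub_divDiff_mul_X hij r)
    (swapVars_divDiff hij r) (X i) (X i)
  rwa [sub_add_cancel] at h

theorem tmul_one_sub_one_tmul_swapVars_eq_divDiff_mul (hij : i ≠ j)
    (r : MvPowerSeries (Fin n) S) :
    (r ⊗ₜ 1 - 1 ⊗ₜ swapVars i j r : BSB S i j) = (divDiff i j r ⊗ₜ 1) * (X i ⊗ₜ 1 - 1 ⊗ₜ X j) := by
  have h := add_mul_tmul_one_sub_one_tmul_add_mul (swapVars_sub_divDiff_mul_X hij r)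
    (swapVars_divDiff hij r) (X i) (X j)
  rwa [sub_add_cancel, ← swapVars_eq_sub_divDiff_mul_X_add hij] at h

theorem X_tmul_one_add_X_tmul_one (i j : Fin n) :
    (X i ⊗ₜ 1 + X j ⊗ₜ 1 : BSB S i j) = 1 ⊗ₜ X i + 1 ⊗ₜ X j := by
  rw [← add_tmul, ← tmul_add]
  exact tmul_one_eq_one_tmul_of_swapVars_eq
    (by rw [swapVars_add, swapVars_X_left, swapVars_X_right, add_comm])

theorem X_tmul_one_mul_X_tmul_one (i j : Fin n) :
    (X i ⊗ₜ 1 * X j ⊗ₜ 1 : BSB S i j) = 1 ⊗ₜ X i * 1 ⊗ₜ X j := by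
  simp only [Algebra.TensorProduct.tmul_mul_tmul, mul_one]
  exact tmul_one_eq_one_tmul_of_swapVars_eq
    (by rw [swapVars_mul, swapVars_X_left, swapVars_X_right, mul_comm])

/- `T² - (x_i + x_j) T + x_i x_j` has invariant coefficients, so in `A` it factors both as
`(T - x_i ⊗ 1) (T - x_j ⊗ 1)` and as `(T - 1 ⊗ x_i) (T - 1 ⊗ x_j)`; the two lemmas below evaluate
the first factorisation at `1 ⊗ x_i` and the second at `x_i ⊗ 1`. -/
theorem X_tmul_one_sub_one_tmul_X_mul_one_tmul_X_sub_X_tmul_one (i j : Fin n) :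
    (X i ⊗ₜ 1 - 1 ⊗ₜ X i : BSB S i j) * (1 ⊗ₜ X i - X j ⊗ₜ 1) = 0 := by
  linear_combination (1 ⊗ₜ X i : BSB S i j) * X_tmul_one_add_X_tmul_one (S := S) i j
    - X_tmul_one_mul_X_tmul_one (S := S) i j

theorem X_tmul_one_sub_one_tmul_X_mul_one_tmul_X_sub_X_tmul_one' (i j : Fin n) :
    (X i ⊗ₜ 1 - 1 ⊗ₜ X j : BSB S i j) * (1 ⊗ₜ X i - X i ⊗ₜ 1) = 0 := by
  linear_combination (-(X i ⊗ₜ 1) : BSB S i j) * X_tmul_one_add_X_tmul_one (S := S) i j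
    + X_tmul_one_mul_X_tmul_one (S := S) i j

end Exchange

theorem xi_exchange_identities_general
    (g : MvPowerSeries (Fin 2) S)
    {n : ℕ} (i j : Fin n) (hij : (i : ℕ) + 1 = (j : ℕ))
    (r : MvPowerSeries (Fin n) S) :
    (r ⊗ₜ[fixedSubalgebra S i j] (1 : MvPowerSeries (Fin n) S)) * xiElt g i j
      = ((1 : MvPowerSeries (Fin n) S) ⊗ₜ[fixedSubalgebra S i j] r) * xiElt g i j ∧
    (r ⊗ₜ[fixedSubalgebra S i j] (1 : MvPowerSeries (Fin n) S)) * xiElt' g i j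
      = ((1 : MvPowerSeries (Fin n) S) ⊗ₜ[fixedSubalgebra S i j] swapVars i j r)
          * xiElt' g i j := by
  have hij' : i ≠ j := Fin.ne_of_val_ne (by omega)
  constructor
  · rw [← sub_eq_zero, ← sub_mul, tmul_one_sub_one_tmul_eq_divDiff_mul hij', xiElt,
      mul_mul_mul_comm, X_tmul_one_sub_one_tmul_X_mul_one_tmul_X_sub_X_tmul_one, mul_zero]
  · rw [← sub_eq_zero, ← sub_mul, tmul_one_sub_one_tmul_swapVars_eq_divDiff_mul hij', xiElt',
      mul_mul_mul_comm, X_tmul_one_sub_one_tmul_X_mul_one_tmul_X_sub_X_tmul_one', mul_zero]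

/-- the exchange identities `(r ⊗ 1)·ξ = (1 ⊗ r)·ξ` and
`(r ⊗ 1)·ξ' = (1 ⊗ s_i(r))·ξ'` in `A = R ⊗_{R^{s_i}} R`. -/
theorem xi_exchange_identities
    (F : MvPowerSeries (Fin 2) S) (hF : IsFormalGroupLaw F)
    (ι : MvPowerSeries (Fin 1) S) (hι : IsFormalInverse F ι)
    (g : MvPowerSeries (Fin 2) S)
    (hg : (X 0 : MvPowerSeries (Fin 2) S) - X 1 = fsub F ι (X 0) (X 1) * g)
    (hgu : IsUnit g)
    {n : ℕ} (i j : Fin n) (hij : (i : ℕ) + 1 = (j : ℕ))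
    (r : MvPowerSeries (Fin n) S) :
    (r ⊗ₜ[fixedSubalgebra S i j] (1 : MvPowerSeries (Fin n) S)) * xiElt g i j
      = ((1 : MvPowerSeries (Fin n) S) ⊗ₜ[fixedSubalgebra S i j] r) * xiElt g i j ∧
    (r ⊗ₜ[fixedSubalgebra S i j] (1 : MvPowerSeries (Fin n) S)) * xiElt' g i j
      = ((1 : MvPowerSeries (Fin n) S) ⊗ₜ[fixedSubalgebra S i j] swapVars i j r)
          * xiElt' g i j :=
  xi_exchange_identities_general g i j hij r
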